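/- arXiv:2404.15409 — 5 statements merged into one kernel-verified Lean document; each statement's English description precedes it below -/
import Mathlib

section
/- Let $X, y$ define an OLS problem with $X^\top X$ invertible and $h_j < 1$. Then the squared Mahalanobis change in the OLS solution upon removing point $j$ satisfies $\|(X^\top X)^{1/2}(\beta_{\mathrm{ols}} - \beta_{(-j)})\|^2 = \frac{h_j\, e_j^2}{(1 - h_j)^2}$, where $e_j = y_j - \langle x_j, \beta_{\mathrm{ols}}\rangle$. -/
open Matrix
open scoped Classical

/-- Square root of a positive semidefinite matrix (junk value `0` otherwise). -/
noncomputable def msqrt {d : ℕ} (S : Matrix (Fin d) (Fin d) ℝ) :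
    Matrix (Fin d) (Fin d) ℝ :=
  if h : S.PosSemidef then
    (h.1.eigenvectorUnitary : Matrix (Fin d) (Fin d) ℝ) *
      diagonal (Real.sqrt ∘ h.1.eigenvalues) *
      (star h.1.eigenvectorUnitary : Matrix (Fin d) (Fin d) ℝ)
  else 0

/-! By the Sherman–Morrison formula, deleting the row `x_j` moves the OLS solution by
`e_j / (1 - h_j) • (XᵀX)⁻¹ x_j`. Since `msqrt (XᵀX)` is a symmetric square root of `XᵀX`, the
squared norm of `msqrt (XᵀX) w` is the quadratic form `wᵀ (XᵀX) w`, which for `w = (XᵀX)⁻¹ x_j`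
is `h_j`. -/

namespace Matrix

variable {K m : Type*} [Field K] [Fintype m] [DecidableEq m]

theorem sub_vecMulVec_mul_eq_one {A : Matrix m m K} (hA : IsUnit A.det) {u w : m → K}
    (hu : w ⬝ᵥ (A⁻¹ *ᵥ u) ≠ 1) :
    (A - vecMulVec u w) *
        (A⁻¹ + (1 - w ⬝ᵥ (A⁻¹ *ᵥ u))⁻¹ • vecMulVec (A⁻¹ *ᵥ u) (w ᵥ* A⁻¹)) = 1 := by
  have hc : (1 - w ⬝ᵥ (A⁻¹ *ᵥ u))⁻¹ * (1 - w ⬝ᵥ (A⁻¹ *ᵥ u)) = 1 :=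
    inv_mul_cancel₀ (sub_ne_zero.mpr hu.symm)
  rw [Matrix.sub_mul, Matrix.mul_add, Matrix.mul_add, mul_nonsing_inv _ hA, Matrix.mul_smul,
    Matrix.mul_smul, mul_vecMulVec, mulVec_mulVec, mul_nonsing_inv _ hA, one_mulVec,
    vecMulVec_mul, vecMulVec_mul_vecMulVec, vecMulVec_smul]
  linear_combination (norm := module) hc • vecMulVec u (w ᵥ* A⁻¹)

theorem inv_sub_vecMulVec {A : Matrix m m K} (hA : IsUnit A.det) {u w : m → K}
    (hu : w ⬝ᵥ (A⁻¹ *ᵥ u) ≠ 1) :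
    (A - vecMulVec u w)⁻¹ =
      A⁻¹ + (1 - w ⬝ᵥ (A⁻¹ *ᵥ u))⁻¹ • vecMulVec (A⁻¹ *ᵥ u) (w ᵥ* A⁻¹) :=
  inv_eq_right_inv (sub_vecMulVec_mul_eq_one hA hu)

theorem inv_mulVec_sub_inv_sub_vecMulVec_mulVec {A : Matrix m m K} (hA : IsUnit A.det)
    {u w : m → K} (hu : w ⬝ᵥ (A⁻¹ *ᵥ u) ≠ 1) (b : m → K) (t : K) :
    A⁻¹ *ᵥ b - (A - vecMulVec u w)⁻¹ *ᵥ (b - t • u) =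
      ((t - w ⬝ᵥ (A⁻¹ *ᵥ b)) / (1 - w ⬝ᵥ (A⁻¹ *ᵥ u))) • (A⁻¹ *ᵥ u) := by
  have hc : (1 - w ⬝ᵥ (A⁻¹ *ᵥ u))⁻¹ * (1 - w ⬝ᵥ (A⁻¹ *ᵥ u)) = 1 :=
    inv_mul_cancel₀ (sub_ne_zero.mpr hu.symm)
  rw [inv_sub_vecMulVec hA hu, add_mulVec, smul_mulVec, vecMulVec_mulVec, op_smul_eq_smul,
    ← dotProduct_mulVec, mulVec_sub, mulVec_smul, dotProduct_sub, dotProduct_smul]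
  linear_combination (norm := module) (-t * hc) • (A⁻¹ *ᵥ u)

end Matrix

namespace Matrix.PosSemidef

variable {d : ℕ} {S : Matrix (Fin d) (Fin d) ℝ}

theorem msqrt_transpose (hS : S.PosSemidef) : (msqrt S)ᵀ = msqrt S := by
  rw [msqrt, dif_pos hS, transpose_mul, transpose_mul, diagonal_transpose, star_eq_conjTranspose,
    conjTranspose_eq_transpose_of_trivial, transpose_transpose, Matrix.mul_assoc]

theorem msqrt_mul_self (hS : S.PosSemidef) : msqrt S * msqrt S = S := by
  have hU := Unitary.star_mul_self_of_mem hS.1.eigenvectorUnitary.2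
  conv_rhs => rw [hS.1.spectral_theorem, Unitary.conjStarAlgAut_apply]
  rw [msqrt, dif_pos hS]
  simp only [Matrix.mul_assoc]
  rw [← Matrix.mul_assoc (star _) _ _, hU, Matrix.one_mul, ← Matrix.mul_assoc (diagonal _),
    diagonal_mul_diagonal]
  congr 3
  ext i
  exact Real.mul_self_sqrt (hS.eigenvalues_nonneg i)

theorem sum_sq_msqrt_mulVec (hS : S.PosSemidef) (x : Fin d → ℝ) :
    ∑ i, (msqrt S *ᵥ x) i ^ 2 = x ⬝ᵥ (S *ᵥ x) := by
  rw [← congrArg (x ⬝ᵥ · *ᵥ x) hS.msqrt_mul_self, ← mulVec_mulVec, dotProduct_mulVec,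
    ← mulVec_transpose, hS.msqrt_transpose]
  simp only [dotProduct, sq]

end Matrix.PosSemidef

theorem ols_remove_one_mahalanobis_general {n d : ℕ} (X : Matrix (Fin n) (Fin d) ℝ)
    (y : Fin n → ℝ) (j : Fin n)
    (hX : IsUnit (Xᵀ * X).det)
    (hj : X j ⬝ᵥ ((Xᵀ * X)⁻¹ *ᵥ X j) < 1) :
    (∑ i : Fin d,
      ((msqrt (Xᵀ * X)) *ᵥ
        (((Xᵀ * X)⁻¹ *ᵥ (Xᵀ *ᵥ y)) -
          ((Xᵀ * X - vecMulVec (X j) (X j))⁻¹ *ᵥ (Xᵀ *ᵥ y - y j • X j)))) i ^ 2)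
    = (X j ⬝ᵥ ((Xᵀ * X)⁻¹ *ᵥ X j)) *
        (y j - X j ⬝ᵥ ((Xᵀ * X)⁻¹ *ᵥ (Xᵀ *ᵥ y)))^2 /
        (1 - X j ⬝ᵥ ((Xᵀ * X)⁻¹ *ᵥ X j))^2 := by
  set A := Xᵀ * X
  set u := X j
  have hA : A.PosSemidef := by simpa using posSemidef_conjTranspose_mul_self X
  have hAv : A *ᵥ (A⁻¹ *ᵥ u) = u := by rw [mulVec_mulVec, mul_nonsing_inv _ hX, one_mulVec]
  have hh : 1 - u ⬝ᵥ (A⁻¹ *ᵥ u) ≠ 0 := by linarith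
  rw [inv_mulVec_sub_inv_sub_vecMulVec_mulVec hX hj.ne, hA.sum_sq_msqrt_mulVec, mulVec_smul, hAv,
    smul_dotProduct, dotProduct_smul, dotProduct_comm (A⁻¹ *ᵥ u), smul_eq_mul, smul_eq_mul]
  field_simp

/-- The squared Mahalanobis change in the OLS solution upon removing point `j`:
`‖(XᵀX)^{1/2}(β_ols − β_{(−j)})‖² = h_j e_j² / (1−h_j)²`. -/
theorem ols_remove_one_mahalanobis {n d : ℕ} (X : Matrix (Fin n) (Fin d) ℝ)
    (y : Fin n → ℝ) (j : Fin n)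
    (hX : IsUnit (Xᵀ * X).det)
    (hXj : IsUnit (Xᵀ * X - vecMulVec (X j) (X j)).det)
    (hj : X j ⬝ᵥ ((Xᵀ * X)⁻¹ *ᵥ X j) < 1) :
    (∑ i : Fin d,
      ((msqrt (Xᵀ * X)) *ᵥ
        (((Xᵀ * X)⁻¹ *ᵥ (Xᵀ *ᵥ y)) -
          ((Xᵀ * X - vecMulVec (X j) (X j))⁻¹ *ᵥ (Xᵀ *ᵥ y - y j • X j)))) i ^ 2)
    = (X j ⬝ᵥ ((Xᵀ * X)⁻¹ *ᵥ X j)) *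
        (y j - X j ⬝ᵥ ((Xᵀ * X)⁻¹ *ᵥ (Xᵀ *ᵥ y)))^2 /
        (1 - X j ⬝ᵥ ((Xᵀ * X)⁻¹ *ᵥ X j))^2 :=
  ols_remove_one_mahalanobis_general X y j hX hj
end

section
/- Fix a dataset $(X,y)$ and starting weights $w \in [0,1]^n$. The greedy residual-thresholding procedure, which repeatedly zeroes the weight of the point with the largest absolute residual of the weighted OLS fit until all residuals are at most the threshold, is monotone in the threshold: if $R \le R'$ and $u, u'$ denote its outputs with thresholds $R, R'$ respectively, then $u_i \le u'_i$ for all $i \in [n]$. -/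
open Matrix

/-- The weighted OLS solution `β_w = (Xᵀ diag(w) X)⁻¹ Xᵀ diag(w) y`. -/
noncomputable def weightedOLS {n d : ℕ} (X : Matrix (Fin n) (Fin d) ℝ)
    (y : Fin n → ℝ) (w : Fin n → ℝ) : Fin d → ℝ :=
  (Xᵀ * Matrix.diagonal w * X)⁻¹ *ᵥ (Xᵀ *ᵥ fun i => w i * y i)

/-- Absolute residual of point `i` under the weighted OLS fit with weights `w`. -/
noncomputable def residW {n d : ℕ} (X : Matrix (Fin n) (Fin d) ℝ)
    (y : Fin n → ℝ) (w : Fin n → ℝ) (i : Fin n) : ℝ :=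
  |y i - X i ⬝ᵥ weightedOLS X y w|

/-- One pass of greedy residual thresholding with fuel: while some supported point
has residual exceeding `R`, zero out the weight of the (least-index) point with
the largest absolute residual. -/
noncomputable def residualThresholding {n d : ℕ} (X : Matrix (Fin n) (Fin d) ℝ)
    (y : Fin n → ℝ) (R : ℝ) : ℕ → (Fin n → ℝ) → (Fin n → ℝ)
  | 0, w => w
  | (m + 1), w =>
    let S : Finset (Fin n) := Finset.univ.filter (fun i => w i ≠ 0)
    let bad : Finset (Fin n) := S.filter (fun i => R < residW X y w i)
    if hbad : bad.Nonempty then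
      have hS : S.Nonempty := hbad.mono (Finset.filter_subset _ _)
      let mx : ℝ := S.sup' hS (fun i => residW X y w i)
      let arg : Finset (Fin n) := S.filter (fun i => residW X y w i = mx)
      if harg : arg.Nonempty then
        residualThresholding X y R m (Function.update w (arg.min' harg) 0)
      else w
    else w

/-!
The index zeroed at each step is an argmax of the residuals, which does not depend on the
threshold. So the runs with thresholds `R ≤ R'` coincide for as long as the run with `R'`
continues; when it stops at some weights `v`, the run with `R` continues from `v`, and since
weights stay nonnegative, zeroing entries can only decrease them.
-/

open Finset

section

variable {n d : ℕ} (X : Matrix (Fin n) (Fin d) ℝ) (y : Fin n → ℝ)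

lemma update_zero_nonneg {ι : Type*} [DecidableEq ι] {w : ι → ℝ} (hw : 0 ≤ w) (j : ι) :
    0 ≤ Function.update w j 0 :=
  le_update_iff.2 ⟨le_rfl, fun k _ => hw k⟩

theorem residualThresholding_le_self (R : ℝ) (m : ℕ) {w : Fin n → ℝ} (hw : 0 ≤ w) :
    residualThresholding X y R m w ≤ w := by
  induction m generalizing w with
  | zero => exact le_rfl
  | succ m ih =>
    rw [residualThresholding]
    dsimp only
    split_ifs
    · exact (ih (update_zero_nonneg hw _)).trans (update_le_self_iff.2 (hw _ : 0 ≤ w _))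
    · exact le_rfl
    · exact le_rfl

theorem residualThresholding_mono_threshold {R R' : ℝ} (hR : R ≤ R') (m : ℕ) {w : Fin n → ℝ}
    (hw : 0 ≤ w) : residualThresholding X y R m w ≤ residualThresholding X y R' m w := by
  induction m generalizing w with
  | zero => exact le_rfl
  | succ m ih =>
    by_cases hbad' : ({i | w i ≠ 0} : Finset (Fin n)).filter (R' < residW X y w ·) |>.Nonempty
    · have hbad : ({i | w i ≠ 0} : Finset (Fin n)).filter (R < residW X y w ·) |>.Nonempty :=
        hbad'.mono <| monotone_filter_right _ fun _ _ h => hR.trans_lt h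
      rw [residualThresholding, residualThresholding, dif_pos hbad, dif_pos hbad']
      dsimp only
      split_ifs
      · exact ih (update_zero_nonneg hw _)
      · exact le_rfl
    · conv_rhs => rw [residualThresholding, dif_neg hbad']
      exact residualThresholding_le_self X y R _ hw

end

/-- Greedy residual thresholding is monotone in the threshold: with a larger
threshold, every returned weight is at least as large. -/
theorem residualThresholding_monotone {n d : ℕ} (X : Matrix (Fin n) (Fin d) ℝ)
    (y : Fin n → ℝ) (w : Fin n → ℝ)
    (hw : ∀ i, 0 ≤ w i ∧ w i ≤ 1) (R R' : ℝ) (hR : R ≤ R') :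
    ∀ i, residualThresholding X y R n w i ≤ residualThresholding X y R' n w i :=
  residualThresholding_mono_threshold X y hR n fun i => (hw i).1
end

section
/- Let $w, w' \in [0,1]^n$ with $\mathrm{supp}(w') \subseteq \mathrm{supp}(w)$ and $\|w - w'\|_1 \cdot L \le 1/2$. If $w$ is $(L,\infty)$-good for $(X,y)$ (i.e., $X^\top\mathrm{diag}(w)X$ is invertible and $x_i^\top (X^\top\mathrm{diag}(w)X)^{-1}x_i \le L$ for all $i \in \mathrm{supp}(w)$), then $X^\top \mathrm{diag}(w')X$ is invertible and for all $i \in \mathrm{supp}(w)$, $x_i^\top (X^\top\mathrm{diag}(w')X)^{-1}x_i \le (1 + 2L\|w - w'\|_1)\,L$. -/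
/-!
Write `A = Xᵀ diag(w) X` and `A' = Xᵀ diag(w') X`. Cauchy–Schwarz for the inner product defined
by `A` gives `(xᵢ ⬝ v)² ≤ (xᵢᵀ A⁻¹ xᵢ) · vᵀAv ≤ L · vᵀAv` for `i ∈ supp w`. As `supp w' ⊆ supp w`,
every row on which the weights differ obeys this bound, so
`vᵀAv - vᵀA'v = ∑ (wᵢ - w'ᵢ) (xᵢ ⬝ v)² ≤ t · vᵀAv` with `t = ‖w - w'‖₁ L ≤ 1/2`;
hence `A' ⪰ (1 - t) A` is positive definite. For `v = A'⁻¹ xᵢ` the new leverage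
`s = xᵢ ⬝ v = vᵀA'v` satisfies `s² ≤ L · vᵀAv ≤ L s / (1 - t)`, so `s ≤ L / (1 - t) ≤ (1 + 2t) L`.
-/

open Matrix

theorem Finset.sum_mul_sub_sum_mul_le {ι : Type*} [Fintype ι] {w w' f : ι → ℝ} {M : ℝ}
    (hf : 0 ≤ f) (hsupp : ∀ i, w' i ≠ 0 → w i ≠ 0) (hM : ∀ i, w i ≠ 0 → f i ≤ M) :
    ∑ i, w i * f i - ∑ i, w' i * f i ≤ (∑ i, |w i - w' i|) * M := by
  rw [← Finset.sum_sub_distrib, Finset.sum_mul]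
  refine Finset.sum_le_sum fun i _ => ?_
  by_cases hi : w i = 0
  · have hi' : w' i = 0 := not_imp_not.mp (hsupp i) hi
    simp [hi, hi']
  · calc w i * f i - w' i * f i = (w i - w' i) * f i := by ring
      _ ≤ |w i - w' i| * f i := by gcongr; exacts [hf i, le_abs_self _]
      _ ≤ |w i - w' i| * M := by gcongr; exact hM i hi

namespace Matrix

variable {ι m : Type*} [Fintype ι]

theorem isHermitian_transpose_mul_diagonal_mul [DecidableEq ι] (X : Matrix ι m ℝ) (c : ι → ℝ) :
    (Xᵀ * diagonal c * X).IsHermitian := by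
  simpa using isHermitian_conjTranspose_mul_mul X (isHermitian_diagonal c)

variable [Fintype m]

theorem PosSemidef.sq_dotProduct_mulVec_le {A : Matrix m m ℝ} (hA : A.PosSemidef) (u v : m → ℝ) :
    (u ⬝ᵥ (A *ᵥ v)) ^ 2 ≤ (u ⬝ᵥ (A *ᵥ u)) * (v ⬝ᵥ (A *ᵥ v)) := by
  let := A.toSeminormedAddCommGroup hA
  let := A.toInnerProductSpace hA
  have inner_eq (x y : m → ℝ) : inner ℝ x y = x ⬝ᵥ (A *ᵥ y) := by
    rw [dotProduct_comm]; rfl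
  simpa only [inner_eq, sq] using real_inner_mul_inner_self_le u v

theorem PosDef.of_mul_dotProduct_mulVec_le {A B : Matrix m m ℝ} (hA : A.PosDef)
    (hB : B.IsHermitian) {a : ℝ} (ha : 0 < a)
    (h : ∀ v, a * (v ⬝ᵥ (A *ᵥ v)) ≤ v ⬝ᵥ (B *ᵥ v)) : B.PosDef := by
  refine .of_dotProduct_mulVec_pos hB fun v hv => ?_
  have := hA.dotProduct_mulVec_pos hv
  simp only [star_trivial] at this ⊢
  exact (mul_pos ha this).trans_le (h v)

theorem PosDef.sq_dotProduct_le [DecidableEq m] {A : Matrix m m ℝ} (hA : A.PosDef)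
    (x v : m → ℝ) : (x ⬝ᵥ v) ^ 2 ≤ (x ⬝ᵥ (A⁻¹ *ᵥ x)) * (v ⬝ᵥ (A *ᵥ v)) := by
  have hx : A *ᵥ (A⁻¹ *ᵥ x) = x := by
    rw [mulVec_mulVec, mul_nonsing_inv _ (A.isUnit_iff_isUnit_det.mp hA.isUnit), one_mulVec]
  have hsymm : (A *ᵥ (A⁻¹ *ᵥ x)) ⬝ᵥ v = A⁻¹ *ᵥ x ⬝ᵥ (A *ᵥ v) := by
    rw [dotProduct_mulVec, ← mulVec_transpose, ← conjTranspose_eq_transpose_of_trivial,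
      hA.isHermitian.eq, dotProduct_comm]
  have := hA.posSemidef.sq_dotProduct_mulVec_le (A⁻¹ *ᵥ x) v
  rwa [hx, ← hsymm, hx, dotProduct_comm (A⁻¹ *ᵥ x)] at this

variable [DecidableEq ι] (X : Matrix ι m ℝ)

theorem posSemidef_transpose_mul_diagonal_mul {c : ι → ℝ} (hc : 0 ≤ c) :
    (Xᵀ * diagonal c * X).PosSemidef := by
  simpa using (PosSemidef.diagonal hc).conjTranspose_mul_mul_same X

theorem dotProduct_transpose_mul_diagonal_mul_mulVec (c : ι → ℝ) (v : m → ℝ) :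
    v ⬝ᵥ ((Xᵀ * diagonal c * X) *ᵥ v) = ∑ i, c i * (X i ⬝ᵥ v) ^ 2 := by
  rw [← mulVec_mulVec, ← mulVec_mulVec, dotProduct_mulVec, vecMul_transpose]
  refine Finset.sum_congr rfl fun i _ => ?_
  rw [mulVec_diagonal]
  change (X i ⬝ᵥ v) * (c i * (X i ⬝ᵥ v)) = _
  ring

theorem one_sub_mul_le_dotProduct_mulVec_of_weight_decrease {w w' : ι → ℝ} {L : ℝ}
    (hsupp : ∀ i, w' i ≠ 0 → w i ≠ 0) (v : m → ℝ)
    (hrow : ∀ i, w i ≠ 0 → (X i ⬝ᵥ v) ^ 2 ≤ L * (v ⬝ᵥ ((Xᵀ * diagonal w * X) *ᵥ v))) :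
    (1 - (∑ i, |w i - w' i|) * L) * (v ⬝ᵥ ((Xᵀ * diagonal w * X) *ᵥ v)) ≤
      v ⬝ᵥ ((Xᵀ * diagonal w' * X) *ᵥ v) := by
  simp only [dotProduct_transpose_mul_diagonal_mul_mulVec] at hrow ⊢
  have := Finset.sum_mul_sub_sum_mul_le (fun i => sq_nonneg (X i ⬝ᵥ v)) hsupp hrow
  linarith

end Matrix

theorem le_one_add_two_mul_mul_of_one_sub_mul_sq_le {s t L : ℝ} (hs : 0 ≤ s) (hL : 0 ≤ L)
    (ht₀ : 0 ≤ t) (ht : t ≤ 1 / 2) (h : (1 - t) * s ^ 2 ≤ L * s) : s ≤ (1 + 2 * t) * L := by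
  rcases hs.eq_or_lt with rfl | hs
  · positivity
  · have : (1 - t) * s ≤ L := le_of_mul_le_mul_right (by nlinarith) hs
    calc s ≤ (1 + 2 * t) * ((1 - t) * s) := by nlinarith [mul_nonneg ht₀ hs.le]
      _ ≤ (1 + 2 * t) * L := by gcongr

theorem leverage_after_weight_decrease_general {n d : ℕ} (X : Matrix (Fin n) (Fin d) ℝ)
    (L : ℝ) (hL : 0 < L) (w w' : Fin n → ℝ)
    (hw : ∀ i, 0 ≤ w i ∧ w i ≤ 1)
    (hsupp : ∀ i, w' i ≠ 0 → w i ≠ 0)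
    (hclose : (∑ i, |w i - w' i|) * L ≤ 1 / 2)
    (hinv : IsUnit (Xᵀ * Matrix.diagonal w * X).det)
    (hlev : ∀ i, w i ≠ 0 → X i ⬝ᵥ ((Xᵀ * Matrix.diagonal w * X)⁻¹ *ᵥ X i) ≤ L) :
    IsUnit (Xᵀ * Matrix.diagonal w' * X).det ∧
    ∀ i, w i ≠ 0 →
      X i ⬝ᵥ ((Xᵀ * Matrix.diagonal w' * X)⁻¹ *ᵥ X i) ≤
        (1 + 2 * L * ∑ i, |w i - w' i|) * L := by
  set Δ := ∑ i, |w i - w' i|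
  set A := Xᵀ * diagonal w * X
  set A' := Xᵀ * diagonal w' * X
  have hA : A.PosDef := (posSemidef_transpose_mul_diagonal_mul X fun i => (hw i).1)
    |>.posDef_iff_det_ne_zero.mpr hinv.ne_zero
  have hrow (v : Fin d → ℝ) (i) (hi : w i ≠ 0) : (X i ⬝ᵥ v) ^ 2 ≤ L * (v ⬝ᵥ (A *ᵥ v)) :=
    (hA.sq_dotProduct_le _ _).trans <| mul_le_mul_of_nonneg_right (hlev i hi)
      (by simpa using hA.posSemidef.dotProduct_mulVec_nonneg v)
  have hlow (v) := one_sub_mul_le_dotProduct_mulVec_of_weight_decrease X hsupp v (hrow v)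
  have hΔL : 0 ≤ Δ * L := mul_nonneg (Finset.sum_nonneg fun i _ => abs_nonneg _) hL.le
  have hA' : A'.PosDef := hA.of_mul_dotProduct_mulVec_le
    (isHermitian_transpose_mul_diagonal_mul X w') (by linarith) hlow
  have hA'unit : IsUnit A'.det := A'.isUnit_iff_isUnit_det.mp hA'.isUnit
  refine ⟨hA'unit, fun i hi => ?_⟩
  set v := A'⁻¹ *ᵥ X i
  have hv : v ⬝ᵥ (A' *ᵥ v) = X i ⬝ᵥ v := by
    rw [mulVec_mulVec, mul_nonsing_inv _ hA'unit, one_mulVec, dotProduct_comm]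
  have hs : 0 ≤ X i ⬝ᵥ v := by simpa [hv] using hA'.posSemidef.dotProduct_mulVec_nonneg v
  refine (le_one_add_two_mul_mul_of_one_sub_mul_sq_le hs hL.le hΔL hclose ?_).trans_eq (by ring)
  calc (1 - Δ * L) * (X i ⬝ᵥ v) ^ 2 ≤ (1 - Δ * L) * (L * (v ⬝ᵥ (A *ᵥ v))) := by
        gcongr
        · linarith
        · exact hrow v i hi
    _ = L * ((1 - Δ * L) * (v ⬝ᵥ (A *ᵥ v))) := by ring
    _ ≤ L * (X i ⬝ᵥ v) := by rw [← hv]; gcongr; exact hlow v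

/-- Removing (or decreasing) weight within the support of an `(L,∞)`-good weight
vector keeps the weighted Gram matrix invertible and blows up leverage scores
by at most a factor `1 + 2L‖w−w'‖₁`. -/
theorem leverage_after_weight_decrease {n d : ℕ} (X : Matrix (Fin n) (Fin d) ℝ)
    (L : ℝ) (hL : 0 < L) (w w' : Fin n → ℝ)
    (hw : ∀ i, 0 ≤ w i ∧ w i ≤ 1) (hw' : ∀ i, 0 ≤ w' i ∧ w' i ≤ 1)
    (hsupp : ∀ i, w' i ≠ 0 → w i ≠ 0)
    (hclose : (∑ i, |w i - w' i|) * L ≤ 1 / 2)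
    (hinv : IsUnit (Xᵀ * Matrix.diagonal w * X).det)
    (hlev : ∀ i, w i ≠ 0 → X i ⬝ᵥ ((Xᵀ * Matrix.diagonal w * X)⁻¹ *ᵥ X i) ≤ L) :
    IsUnit (Xᵀ * Matrix.diagonal w' * X).det ∧
    ∀ i, w i ≠ 0 →
      X i ⬝ᵥ ((Xᵀ * Matrix.diagonal w' * X)⁻¹ *ᵥ X i) ≤
        (1 + 2 * L * ∑ i, |w i - w' i|) * L :=
  leverage_after_weight_decrease_general X L hL w w' hw hsupp hclose hinv hlev
end

section
/- Let $w' \in [0,1]^n$ be $(L,R)$-good for $(X,y)$, and let $v \in [0,1]^n$ satisfy $\mathrm{supp}(w')\cap\mathrm{supp}(v) = \emptyset$ and $\|v\|_1 L \le 1/8$. Set $w = w' + v$ and $\eta = 1 + 8\|v\|_1 L$. Assume $X^\top \mathrm{diag}(w)X$ is invertible and $x_j^\top (X^\top\mathrm{diag}(w)X)^{-1}x_j \le 2L$ for all $j \in \mathrm{supp}(w)$. If $\max_{i \in \mathrm{supp}(w)}|y_i - x_i^\top \beta_w| > \eta R$, then every maximizer of $|y_i - x_i^\top \beta_w|$ over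 $\mathrm{supp}(w)$ lies in $\mathrm{supp}(v)$. -/
/-!
Write `β = β_{w'+v}`, `β' = β_{w'}`, `r' = y - Xβ'` and `A = Xᵀ diag(w'+v) X`. The normal
equations give `β - β' = A⁻¹ Xᵀ (v ⊙ r')`, so each fitted value moves by
`x_jᵀ(β - β') = ∑ₖ vₖ r'ₖ x_jᵀA⁻¹xₖ`, and Cauchy–Schwarz for the positive semidefinite `A⁻¹`
bounds the cross-leverages by `2L`. On the support of `w' + v` the shift is therefore at most
`2L U` with `U = ∑ₖ vₖ |r'ₖ|`, while `U ≤ ‖v‖₁ (M + 2L U)` for the maximal residual `M`.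
A maximizer `i` outside `supp v` lies in `supp w'`, so `M ≤ R + 2L U`; eliminating `U` leaves
`M ≤ (1 + 8‖v‖₁L) R`.
-/

open Matrix

/-- With `t = V L`, the hypotheses give `(1 - 4t) M ≤ (1 - 2t) R`, and
`1 - 2t ≤ (1 - 4t)(1 + 8t)` as long as `0 ≤ t ≤ 3/16`. -/
theorem le_one_add_mul_of_coupled_bounds {V L M R U : ℝ} (hV : 0 ≤ V) (hL : 0 ≤ L)
    (ht : V * L ≤ 1 / 8) (hM : 0 ≤ M) (hU : U ≤ V * (M + 2 * L * U))
    (hMR : M ≤ R + 2 * L * U) : M ≤ (1 + 8 * V * L) * R := by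
  set t := V * L
  have ht₀ : 0 ≤ t := mul_nonneg hV hL
  have hLU : 2 * L * U * (1 - 2 * t) ≤ 2 * t * M := by
    have := mul_le_mul_of_nonneg_left hU (by positivity : (0 : ℝ) ≤ 2 * L)
    linarith
  have hMR' : (1 - 4 * t) * M ≤ (1 - 2 * t) * R := by
    have := mul_le_mul_of_nonneg_left hMR (by linarith : (0 : ℝ) ≤ 1 - 2 * t)
    linarith
  have hR : 0 ≤ R :=
    nonneg_of_mul_nonneg_right (by nlinarith) (by linarith : (0 : ℝ) < 1 - 2 * t)
  refine le_of_mul_le_mul_left ?_ (by linarith : (0 : ℝ) < 1 - 4 * t)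
  calc (1 - 4 * t) * M ≤ (1 - 2 * t) * R := hMR'
    _ ≤ (1 - 4 * t) * ((1 + 8 * V * L) * R) := by
      nlinarith [mul_nonneg (mul_nonneg hR ht₀) (by linarith : (0 : ℝ) ≤ 6 - 32 * t)]

namespace Matrix

variable {m n : Type*} [Fintype m] [Fintype n]

theorem PosSemidef.dotProduct_mulVec_sq_le {M : Matrix n n ℝ} (hM : M.PosSemidef) (a b : n → ℝ) :
    (a ⬝ᵥ M *ᵥ b) ^ 2 ≤ (a ⬝ᵥ M *ᵥ a) * (b ⬝ᵥ M *ᵥ b) := by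
  let _ := M.toSeminormedAddCommGroup hM
  let _ := M.toInnerProductSpace hM
  have inner_eq : ∀ x z : n → ℝ, x ⬝ᵥ M *ᵥ z = inner ℝ x z := fun x z => by
    change _ = (M *ᵥ z) ⬝ᵥ star x
    simp [dotProduct_comm]
  simpa only [inner_eq, sq] using real_inner_mul_inner_self_le a b

theorem PosSemidef.abs_dotProduct_mulVec_le {M : Matrix n n ℝ} (hM : M.PosSemidef)
    {a b : n → ℝ} {c : ℝ} (ha : a ⬝ᵥ M *ᵥ a ≤ c) (hb : b ⬝ᵥ M *ᵥ b ≤ c) :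
    |a ⬝ᵥ M *ᵥ b| ≤ c := by
  have ha₀ : 0 ≤ a ⬝ᵥ M *ᵥ a := by simpa using hM.dotProduct_mulVec_nonneg a
  have hb₀ : 0 ≤ b ⬝ᵥ M *ᵥ b := by simpa using hM.dotProduct_mulVec_nonneg b
  refine abs_le_of_sq_le_sq ?_ (ha₀.trans ha)
  calc (a ⬝ᵥ M *ᵥ b) ^ 2 ≤ (a ⬝ᵥ M *ᵥ a) * (b ⬝ᵥ M *ᵥ b) := hM.dotProduct_mulVec_sq_le a b
    _ ≤ c ^ 2 := by rw [sq]; exact mul_le_mul ha hb hb₀ (ha₀.trans ha)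

theorem dotProduct_mulVec_transpose_mulVec {R : Type*} [CommSemiring R] (B : Matrix n n R)
    (X : Matrix m n R) (x : n → R) (u : m → R) :
    x ⬝ᵥ B *ᵥ (Xᵀ *ᵥ u) = ∑ k, u k * (x ⬝ᵥ B *ᵥ X k) := by
  simp only [mulVec_transpose, vecMul_eq_sum, mulVec_sum, dotProduct_sum, mulVec_smul,
    dotProduct_smul, smul_eq_mul]

variable [DecidableEq m]

theorem posSemidef_transpose_mul_diagonal_mul_s11 (X : Matrix m n ℝ) {w : m → ℝ} (hw : 0 ≤ w) :
    (Xᵀ * diagonal w * X).PosSemidef := by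
  simpa using (PosSemidef.diagonal hw).conjTranspose_mul_mul_same X

theorem transpose_mul_diagonal_mul_mulVec {R : Type*} [CommSemiring R] (X : Matrix m n R)
    (w : m → R) (b : n → R) :
    (Xᵀ * diagonal w * X) *ᵥ b = Xᵀ *ᵥ fun i => w i * (X i ⬝ᵥ b) := by
  rw [Matrix.mul_assoc, ← mulVec_mulVec, ← mulVec_mulVec]
  congr 1
  funext i
  exact mulVec_diagonal w (X *ᵥ b) i

theorem transpose_mulVec_mul_sub {R : Type*} [CommRing R] (X : Matrix m n R) (w y : m → R)
    (b : n → R) :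
    (Xᵀ *ᵥ fun i => w i * (y i - X i ⬝ᵥ b)) =
      (Xᵀ *ᵥ fun i => w i * y i) - (Xᵀ * diagonal w * X) *ᵥ b := by
  rw [transpose_mul_diagonal_mul_mulVec, ← mulVec_sub]
  congr 1
  funext i
  simp only [Pi.sub_apply, mul_sub]

end Matrix

section weightedOLS

variable {n d : ℕ} (X : Matrix (Fin n) (Fin d) ℝ) (y : Fin n → ℝ)

theorem gram_mulVec_weightedOLS {w : Fin n → ℝ} (hw : IsUnit (Xᵀ * diagonal w * X).det) :
    (Xᵀ * diagonal w * X) *ᵥ weightedOLS X y w = Xᵀ *ᵥ fun i => w i * y i := by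
  rw [weightedOLS, mulVec_mulVec, mul_nonsing_inv _ hw, one_mulVec]

theorem transpose_mulVec_mul_residual_weightedOLS {w : Fin n → ℝ}
    (hw : IsUnit (Xᵀ * diagonal w * X).det) :
    (Xᵀ *ᵥ fun i => w i * (y i - X i ⬝ᵥ weightedOLS X y w)) = 0 := by
  rw [transpose_mulVec_mul_sub, gram_mulVec_weightedOLS X y hw, sub_self]

theorem weightedOLS_add_sub {w v : Fin n → ℝ} (hw : IsUnit (Xᵀ * diagonal w * X).det)
    (hwv : IsUnit (Xᵀ * diagonal (w + v) * X).det) :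
    weightedOLS X y (w + v) - weightedOLS X y w =
      (Xᵀ * diagonal (w + v) * X)⁻¹ *ᵥ
        (Xᵀ *ᵥ fun k => v k * (y k - X k ⬝ᵥ weightedOLS X y w)) := by
  set β := weightedOLS X y w
  have gram_mulVec_sub : (Xᵀ * diagonal (w + v) * X) *ᵥ (weightedOLS X y (w + v) - β) =
      Xᵀ *ᵥ fun k => v k * (y k - X k ⬝ᵥ β) :=
    calc (Xᵀ * diagonal (w + v) * X) *ᵥ (weightedOLS X y (w + v) - β)
        = Xᵀ *ᵥ fun k => (w + v) k * (y k - X k ⬝ᵥ β) := by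
          rw [mulVec_sub, gram_mulVec_weightedOLS X y hwv, transpose_mulVec_mul_sub]
      _ = (Xᵀ *ᵥ fun k => w k * (y k - X k ⬝ᵥ β)) + Xᵀ *ᵥ fun k => v k * (y k - X k ⬝ᵥ β) := by
          rw [← mulVec_add]
          congr 1
          funext k
          simp only [Pi.add_apply, add_mul]
      _ = Xᵀ *ᵥ fun k => v k * (y k - X k ⬝ᵥ β) := by
          rw [transpose_mulVec_mul_residual_weightedOLS X y hw, zero_add]
  rw [← gram_mulVec_sub, mulVec_mulVec, nonsing_inv_mul _ hwv, one_mulVec]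

theorem dotProduct_weightedOLS_add_sub {w v : Fin n → ℝ} (hw : IsUnit (Xᵀ * diagonal w * X).det)
    (hwv : IsUnit (Xᵀ * diagonal (w + v) * X).det) (x : Fin d → ℝ) :
    x ⬝ᵥ weightedOLS X y (w + v) - x ⬝ᵥ weightedOLS X y w =
      ∑ k, v k * (y k - X k ⬝ᵥ weightedOLS X y w) *
        (x ⬝ᵥ (Xᵀ * diagonal (w + v) * X)⁻¹ *ᵥ X k) := by
  rw [← dotProduct_sub, weightedOLS_add_sub X y hw hwv, dotProduct_mulVec_transpose_mulVec]

variable {w v : Fin n → ℝ} (hw₀ : 0 ≤ w) (hv₀ : 0 ≤ v) (hw : IsUnit (Xᵀ * diagonal w * X).det)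
  (hwv : IsUnit (Xᵀ * diagonal (w + v) * X).det) {c : ℝ}
  (hlev : ∀ j, (w + v) j ≠ 0 → X j ⬝ᵥ (Xᵀ * diagonal (w + v) * X)⁻¹ *ᵥ X j ≤ c)
include hw₀ hv₀ hw hwv hlev

theorem abs_dotProduct_weightedOLS_add_sub_le {j : Fin n} (hj : (w + v) j ≠ 0) :
    |X j ⬝ᵥ weightedOLS X y (w + v) - X j ⬝ᵥ weightedOLS X y w| ≤
      c * ∑ k, v k * |y k - X k ⬝ᵥ weightedOLS X y w| := by
  have hA := (posSemidef_transpose_mul_diagonal_mul_s11 X (add_nonneg hw₀ hv₀)).inv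
  rw [dotProduct_weightedOLS_add_sub X y hw hwv, Finset.mul_sum]
  refine (Finset.abs_sum_le_sum_abs _ _).trans (Finset.sum_le_sum fun k _ => ?_)
  rcases eq_or_ne (v k) 0 with hk | hk
  · simp [hk]
  have hwvk : (w + v) k ≠ 0 := (add_pos_of_nonneg_of_pos (hw₀ k) ((hv₀ k).lt_of_ne' hk)).ne'
  rw [abs_mul, abs_mul, abs_of_nonneg (hv₀ k), mul_comm c]
  exact mul_le_mul_of_nonneg_left (hA.abs_dotProduct_mulVec_le (hlev j hj) (hlev k hwvk))
    (mul_nonneg (hv₀ k) (abs_nonneg _))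

theorem sum_mul_abs_residual_weightedOLS_le {M : ℝ}
    (hM : ∀ k, (w + v) k ≠ 0 → |y k - X k ⬝ᵥ weightedOLS X y (w + v)| ≤ M) :
    ∑ k, v k * |y k - X k ⬝ᵥ weightedOLS X y w| ≤
      (∑ k, |v k|) * (M + c * ∑ k, v k * |y k - X k ⬝ᵥ weightedOLS X y w|) := by
  rw [Finset.sum_mul]
  refine Finset.sum_le_sum fun k _ => ?_
  rcases eq_or_ne (v k) 0 with hk | hk
  · simp [hk]
  have hwvk : (w + v) k ≠ 0 := (add_pos_of_nonneg_of_pos (hw₀ k) ((hv₀ k).lt_of_ne' hk)).ne'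
  rw [abs_of_nonneg (hv₀ k)]
  refine mul_le_mul_of_nonneg_left ?_ (hv₀ k)
  calc |y k - X k ⬝ᵥ weightedOLS X y w|
      ≤ |y k - X k ⬝ᵥ weightedOLS X y (w + v)| +
          |X k ⬝ᵥ weightedOLS X y (w + v) - X k ⬝ᵥ weightedOLS X y w| := abs_sub_le _ _ _
    _ ≤ _ := add_le_add (hM k hwvk)
          (abs_dotProduct_weightedOLS_add_sub_le X y hw₀ hv₀ hw hwv hlev hwvk)

end weightedOLS

theorem argmax_residual_in_added_support_general {n d : ℕ} (X : Matrix (Fin n) (Fin d) ℝ)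
    (y : Fin n → ℝ) (L R : ℝ) (hL : 0 < L) (w' v : Fin n → ℝ)
    (hw' : ∀ i, 0 ≤ w' i ∧ w' i ≤ 1) (hv : ∀ i, 0 ≤ v i ∧ v i ≤ 1)
    (hv1 : (∑ i, |v i|) * L ≤ 1 / 8)
    -- (L,R)-goodness of w'
    (hinv' : IsUnit (Xᵀ * Matrix.diagonal w' * X).det)
    (hres' : ∀ i, w' i ≠ 0 → |X i ⬝ᵥ weightedOLS X y w' - y i| ≤ R)
    -- assumptions on w = w' + v
    (hinv : IsUnit (Xᵀ * Matrix.diagonal (w' + v) * X).det)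
    (hlev : ∀ j, (w' + v) j ≠ 0 →
      X j ⬝ᵥ ((Xᵀ * Matrix.diagonal (w' + v) * X)⁻¹ *ᵥ X j) ≤ 2 * L)
    -- the maximal residual exceeds ηR
    (hmax : ∃ i, (w' + v) i ≠ 0 ∧
      (1 + 8 * (∑ i, |v i|) * L) * R < |y i - X i ⬝ᵥ weightedOLS X y (w' + v)|) :
    ∀ i, (w' + v) i ≠ 0 →
      (∀ j, (w' + v) j ≠ 0 →
        |y j - X j ⬝ᵥ weightedOLS X y (w' + v)| ≤
          |y i - X i ⬝ᵥ weightedOLS X y (w' + v)|) →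
      v i ≠ 0 := by
  intro i hi hargmax hvi
  have hw'i : w' i ≠ 0 := by simpa [hvi] using hi
  have hw₀ : 0 ≤ w' := fun k => (hw' k).1
  have hv₀ : 0 ≤ v := fun k => (hv k).1
  have hshift := abs_dotProduct_weightedOLS_add_sub_le X y hw₀ hv₀ hinv' hinv hlev hi
  have hU := sum_mul_abs_residual_weightedOLS_le X y hw₀ hv₀ hinv' hinv hlev hargmax
  have hMR : |y i - X i ⬝ᵥ weightedOLS X y (w' + v)| ≤
      R + 2 * L * ∑ k, v k * |y k - X k ⬝ᵥ weightedOLS X y w'| := by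
    rw [abs_sub_comm]
    linarith [abs_sub_le (X i ⬝ᵥ weightedOLS X y (w' + v)) (X i ⬝ᵥ weightedOLS X y w') (y i),
      hres' i hw'i]
  have hbound := le_one_add_mul_of_coupled_bounds (Finset.sum_nonneg fun k _ => abs_nonneg (v k))
    hL.le hv1 (abs_nonneg _) hU hMR
  obtain ⟨i₀, hi₀, hgt⟩ := hmax
  linarith [hargmax i₀ hi₀]

/-- Adding weight outside the support of an `(L,R)`-good vector: if the maximal
residual under the augmented weights exceeds `ηR` with `η = 1 + 8‖v‖₁L`, then
every maximizer of the residual lies among the newly added points. -/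
theorem argmax_residual_in_added_support {n d : ℕ} (X : Matrix (Fin n) (Fin d) ℝ)
    (y : Fin n → ℝ) (L R : ℝ) (hL : 0 < L) (hR : 0 < R) (w' v : Fin n → ℝ)
    (hw' : ∀ i, 0 ≤ w' i ∧ w' i ≤ 1) (hv : ∀ i, 0 ≤ v i ∧ v i ≤ 1)
    (hdisj : ∀ i, w' i ≠ 0 → v i = 0)
    (hv1 : (∑ i, |v i|) * L ≤ 1 / 8)
    -- (L,R)-goodness of w'
    (hinv' : IsUnit (Xᵀ * Matrix.diagonal w' * X).det)
    (hlev' : ∀ i, w' i ≠ 0 → X i ⬝ᵥ ((Xᵀ * Matrix.diagonal w' * X)⁻¹ *ᵥ X i) ≤ L)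
    (hres' : ∀ i, w' i ≠ 0 → |X i ⬝ᵥ weightedOLS X y w' - y i| ≤ R)
    -- assumptions on w = w' + v
    (hinv : IsUnit (Xᵀ * Matrix.diagonal (w' + v) * X).det)
    (hlev : ∀ j, (w' + v) j ≠ 0 →
      X j ⬝ᵥ ((Xᵀ * Matrix.diagonal (w' + v) * X)⁻¹ *ᵥ X j) ≤ 2 * L)
    -- the maximal residual exceeds ηR
    (hmax : ∃ i, (w' + v) i ≠ 0 ∧
      (1 + 8 * (∑ i, |v i|) * L) * R < |y i - X i ⬝ᵥ weightedOLS X y (w' + v)|) :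
    ∀ i, (w' + v) i ≠ 0 →
      (∀ j, (w' + v) j ≠ 0 →
        |y j - X j ⬝ᵥ weightedOLS X y (w' + v)| ≤
          |y i - X i ⬝ᵥ weightedOLS X y (w' + v)|) →
      v i ≠ 0 :=
  argmax_residual_in_added_support_general X y L R hL w' v hw' hv hv1 hinv' hres' hinv hlev hmax
end

section
/- Let $(X,y)$ be a dataset, $v, w \in [0,1]^n$ weight vectors that are both $(L,R)$-good for $(X,y)$, with $\|v-w\|_1 \cdot L \le 1/4$. Set $S_v = X^\top\mathrm{diag}(v)X$, $\beta_v = S_v^{-1}X^\top\mathrm{diag}(v)y$, and similarly $\beta_w$. Then $\|S_v^{1/2}(\beta_v - \beta_w)\|^2 \le 4\|v - w\|_1^2\, L R^2$. -/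
open Matrix

/-- Symmetric matrices give symmetric bilinear forms. -/
lemma aux_symm_dot {d : ℕ} (M : Matrix (Fin d) (Fin d) ℝ) (hsym : Mᵀ = M)
    (x z : Fin d → ℝ) : x ⬝ᵥ (M *ᵥ z) = z ⬝ᵥ (M *ᵥ x) := by
  calc x ⬝ᵥ (M *ᵥ z) = (x ᵥ* M) ⬝ᵥ z := dotProduct_mulVec x M z
    _ = (Mᵀ *ᵥ x) ⬝ᵥ z := by rw [mulVec_transpose]
    _ = (M *ᵥ x) ⬝ᵥ z := by rw [hsym]
    _ = z ⬝ᵥ (M *ᵥ x) := dotProduct_comm _ _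

/-- Cauchy–Schwarz for a positive semidefinite quadratic form. -/
lemma aux_psd_cs {d : ℕ} (M : Matrix (Fin d) (Fin d) ℝ) (hsym : Mᵀ = M)
    (hpsd : ∀ z, 0 ≤ z ⬝ᵥ (M *ᵥ z)) (x z : Fin d → ℝ) :
    (x ⬝ᵥ (M *ᵥ z)) ^ 2 ≤ (x ⬝ᵥ (M *ᵥ x)) * (z ⬝ᵥ (M *ᵥ z)) := by
  have key : ∀ t : ℝ, 0 ≤ (z ⬝ᵥ (M *ᵥ z)) * (t * t) + (2 * (x ⬝ᵥ (M *ᵥ z))) * t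
      + (x ⬝ᵥ (M *ᵥ x)) := by
    intro t
    have h := hpsd (x + t • z)
    have e : (x + t • z) ⬝ᵥ (M *ᵥ (x + t • z))
        = (z ⬝ᵥ (M *ᵥ z)) * (t * t) + (2 * (x ⬝ᵥ (M *ᵥ z))) * t + (x ⬝ᵥ (M *ᵥ x)) := by
      rw [mulVec_add, mulVec_smul, dotProduct_add, add_dotProduct, add_dotProduct,
        dotProduct_smul, smul_dotProduct, smul_dotProduct, dotProduct_smul,
        aux_symm_dot M hsym z x]
      simp only [smul_eq_mul]
      ring
    linarith [e ▸ h]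
  have hd := discrim_le_zero key
  rw [discrim] at hd
  nlinarith [hd]

/-- Final arithmetic step. -/
lemma aux_arith (L R ε Q Q' a : ℝ) (hL : 0 < L) (hR : 0 < R)
    (hQ0 : 0 ≤ Q) (hQ'0 : 0 ≤ Q') (hε0 : 0 ≤ ε) (hεL : ε * L ≤ 1 / 4)
    (ha0 : 0 ≤ a) (ha2 : a ^ 2 = L * max Q Q')
    (hQ'le : Q' ≤ Q + ε * (L * Q')) (hQle : Q ≤ ε * (a * R + L * Q)) :
    Q ≤ 4 * ε ^ 2 * L * R ^ 2 := by
  have hQ'Q : Q' ≤ (4 / 3) * Q := by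
    have h := mul_le_mul_of_nonneg_right hεL hQ'0
    nlinarith [hQ'le]
  have hmaxQ : max Q Q' ≤ (4 / 3) * Q := max_le (by linarith) hQ'Q
  have h34 : (3 / 4) * Q ≤ ε * (a * R) := by
    have h := mul_le_mul_of_nonneg_right hεL hQ0
    nlinarith [hQle]
  have hsq : ((3 / 4) * Q) ^ 2 ≤ (ε * (a * R)) ^ 2 :=
    pow_le_pow_left₀ (by linarith) h34 2
  have hch : (ε * (a * R)) ^ 2 = ε ^ 2 * (L * max Q Q') * R ^ 2 := by
    rw [mul_pow, mul_pow, ha2]; ring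
  have hch2 : ε ^ 2 * (L * max Q Q') * R ^ 2 ≤ ε ^ 2 * (L * ((4 / 3) * Q)) * R ^ 2 := by
    gcongr
  have hfin : (9 / 16) * (Q * Q) ≤ (4 / 3) * (ε ^ 2 * L * R ^ 2) * Q := by nlinarith
  rcases eq_or_lt_of_le hQ0 with h0 | hQpos
  · rw [← h0]
    positivity
  · have hmul : Q * Q ≤ 4 * ε ^ 2 * L * R ^ 2 * Q := by
      nlinarith [mul_self_nonneg Q]
    exact le_of_mul_le_mul_right hmul hQpos

/-- If `v` and `w` are both `(L,R)`-good for `(X,y)` and `‖v−w‖₁ L ≤ 1/4`, then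
the Mahalanobis distance (w.r.t. `S_v`) between the two weighted OLS solutions
satisfies `‖S_v^{1/2}(β_v − β_w)‖² ≤ 4 ‖v−w‖₁² L R²`. -/
theorem parameter_stability_of_good_weights {n d : ℕ}
    (X : Matrix (Fin n) (Fin d) ℝ) (y : Fin n → ℝ)
    (L R : ℝ) (hL : 0 < L) (hR : 0 < R) (v w : Fin n → ℝ)
    (hv01 : ∀ i, 0 ≤ v i ∧ v i ≤ 1) (hw01 : ∀ i, 0 ≤ w i ∧ w i ≤ 1)
    (hclose : (∑ i, |v i - w i|) * L ≤ 1 / 4)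
    -- (L,R)-goodness of v
    (hinvv : IsUnit (Xᵀ * Matrix.diagonal v * X).det)
    (hlevv : ∀ i, v i ≠ 0 → X i ⬝ᵥ ((Xᵀ * Matrix.diagonal v * X)⁻¹ *ᵥ X i) ≤ L)
    (hresv : ∀ i, v i ≠ 0 → |X i ⬝ᵥ weightedOLS X y v - y i| ≤ R)
    -- (L,R)-goodness of w
    (hinvw : IsUnit (Xᵀ * Matrix.diagonal w * X).det)
    (hlevw : ∀ i, w i ≠ 0 → X i ⬝ᵥ ((Xᵀ * Matrix.diagonal w * X)⁻¹ *ᵥ X i) ≤ L)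
    (hresw : ∀ i, w i ≠ 0 → |X i ⬝ᵥ weightedOLS X y w - y i| ≤ R) :
    (weightedOLS X y v - weightedOLS X y w) ⬝ᵥ
        ((Xᵀ * Matrix.diagonal v * X) *ᵥ (weightedOLS X y v - weightedOLS X y w))
      ≤ 4 * (∑ i, |v i - w i|) ^ 2 * L * R ^ 2 := by
  classical
  set βv := weightedOLS X y v with hβv
  set βw := weightedOLS X y w with hβw
  set Δ : Fin d → ℝ := βv - βw with hΔ
  set ε := ∑ i, |v i - w i| with hε
  clear_value βv βw
  -- general facts about the quadratic forms
  have hquad : ∀ (c : Fin n → ℝ) (z : Fin d → ℝ),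
      (Xᵀ * Matrix.diagonal c * X) *ᵥ z = Xᵀ *ᵥ (fun i => c i * (X *ᵥ z) i) := by
    intro c z
    have h : Matrix.diagonal c *ᵥ (X *ᵥ z) = fun i => c i * (X *ᵥ z) i :=
      funext fun i => mulVec_diagonal c (X *ᵥ z) i
    rw [← mulVec_mulVec, ← mulVec_mulVec, h]
  have hdotT : ∀ (z : Fin d → ℝ) (u : Fin n → ℝ),
      z ⬝ᵥ (Xᵀ *ᵥ u) = ∑ i, (X *ᵥ z) i * u i := by
    intro z u; rw [dotProduct_mulVec, vecMul_transpose]; rfl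
  have hsymm : ∀ c : Fin n → ℝ,
      (Xᵀ * Matrix.diagonal c * X)ᵀ = Xᵀ * Matrix.diagonal c * X := by
    intro c; simp [Matrix.transpose_mul, Matrix.mul_assoc]
  have hform : ∀ (c : Fin n → ℝ) (z : Fin d → ℝ),
      z ⬝ᵥ ((Xᵀ * Matrix.diagonal c * X) *ᵥ z) = ∑ i, c i * (X *ᵥ z) i ^ 2 := by
    intro c z
    rw [hquad, hdotT]
    exact Finset.sum_congr rfl fun i _ => by ring
  have hpsd : ∀ (c : Fin n → ℝ), (∀ i, 0 ≤ c i) →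
      ∀ z, 0 ≤ z ⬝ᵥ ((Xᵀ * Matrix.diagonal c * X) *ᵥ z) := by
    intro c hc z
    rw [hform]
    exact Finset.sum_nonneg fun i _ => mul_nonneg (hc i) (sq_nonneg _)
  set Q := Δ ⬝ᵥ ((Xᵀ * Matrix.diagonal v * X) *ᵥ Δ) with hQdef
  set Q' := Δ ⬝ᵥ ((Xᵀ * Matrix.diagonal w * X) *ᵥ Δ) with hQ'def
  clear_value Q Q' ε
  have hQ0 : 0 ≤ Q := by rw [hQdef]; exact hpsd v (fun i => (hv01 i).1) Δ
  have hQ'0 : 0 ≤ Q' := by rw [hQ'def]; exact hpsd w (fun i => (hw01 i).1) Δ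
  have hε0 : 0 ≤ ε := by
    rw [hε]; exact Finset.sum_nonneg fun i _ => abs_nonneg _
  -- inverse facts for v
  have hsymInvV : ((Xᵀ * Matrix.diagonal v * X)⁻¹)ᵀ = (Xᵀ * Matrix.diagonal v * X)⁻¹ := by
    rw [Matrix.transpose_nonsing_inv, hsymm v]
  have hA1ΔV : (Xᵀ * Matrix.diagonal v * X)⁻¹ *ᵥ ((Xᵀ * Matrix.diagonal v * X) *ᵥ Δ) = Δ := by
    rw [mulVec_mulVec, Matrix.nonsing_inv_mul _ hinvv, one_mulVec]
  have hpsdInvV : ∀ z, 0 ≤ z ⬝ᵥ ((Xᵀ * Matrix.diagonal v * X)⁻¹ *ᵥ z) := by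
    intro z
    have h1 : (Xᵀ * Matrix.diagonal v * X) *ᵥ ((Xᵀ * Matrix.diagonal v * X)⁻¹ *ᵥ z) = z := by
      rw [mulVec_mulVec, Matrix.mul_nonsing_inv _ hinvv, one_mulVec]
    have h2 := hpsd v (fun i => (hv01 i).1) ((Xᵀ * Matrix.diagonal v * X)⁻¹ *ᵥ z)
    rw [h1] at h2
    rwa [dotProduct_comm] at h2
  -- inverse facts for w
  have hsymInvW : ((Xᵀ * Matrix.diagonal w * X)⁻¹)ᵀ = (Xᵀ * Matrix.diagonal w * X)⁻¹ := by
    rw [Matrix.transpose_nonsing_inv, hsymm w]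
  have hA1ΔW : (Xᵀ * Matrix.diagonal w * X)⁻¹ *ᵥ ((Xᵀ * Matrix.diagonal w * X) *ᵥ Δ) = Δ := by
    rw [mulVec_mulVec, Matrix.nonsing_inv_mul _ hinvw, one_mulVec]
  have hpsdInvW : ∀ z, 0 ≤ z ⬝ᵥ ((Xᵀ * Matrix.diagonal w * X)⁻¹ *ᵥ z) := by
    intro z
    have h1 : (Xᵀ * Matrix.diagonal w * X) *ᵥ ((Xᵀ * Matrix.diagonal w * X)⁻¹ *ᵥ z) = z := by
      rw [mulVec_mulVec, Matrix.mul_nonsing_inv _ hinvw, one_mulVec]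
    have h2 := hpsd w (fun i => (hw01 i).1) ((Xᵀ * Matrix.diagonal w * X)⁻¹ *ᵥ z)
    rw [h1] at h2
    rwa [dotProduct_comm] at h2
  -- leverage bounds on the prediction differences
  have hgv : ∀ i, v i ≠ 0 → (X *ᵥ Δ) i ^ 2 ≤ L * Q := by
    intro i hi
    have hcs := aux_psd_cs _ hsymInvV hpsdInvV (X i) ((Xᵀ * Matrix.diagonal v * X) *ᵥ Δ)
    rw [hA1ΔV, dotProduct_comm ((Xᵀ * Matrix.diagonal v * X) *ᵥ Δ) Δ, ← hQdef] at hcs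
    calc (X *ᵥ Δ) i ^ 2 = (X i ⬝ᵥ Δ) ^ 2 := rfl
      _ ≤ (X i ⬝ᵥ ((Xᵀ * Matrix.diagonal v * X)⁻¹ *ᵥ X i)) * Q := hcs
      _ ≤ L * Q := mul_le_mul_of_nonneg_right (hlevv i hi) hQ0
  have hgw : ∀ i, w i ≠ 0 → (X *ᵥ Δ) i ^ 2 ≤ L * Q' := by
    intro i hi
    have hcs := aux_psd_cs _ hsymInvW hpsdInvW (X i) ((Xᵀ * Matrix.diagonal w * X) *ᵥ Δ)
    rw [hA1ΔW, dotProduct_comm ((Xᵀ * Matrix.diagonal w * X) *ᵥ Δ) Δ, ← hQ'def] at hcs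
    calc (X *ᵥ Δ) i ^ 2 = (X i ⬝ᵥ Δ) ^ 2 := rfl
      _ ≤ (X i ⬝ᵥ ((Xᵀ * Matrix.diagonal w * X)⁻¹ *ᵥ X i)) * Q' := hcs
      _ ≤ L * Q' := mul_le_mul_of_nonneg_right (hlevw i hi) hQ'0
  -- normal equations
  have hAβv : (Xᵀ * Matrix.diagonal v * X) *ᵥ βv = Xᵀ *ᵥ (fun i => v i * y i) := by
    rw [hβv]; unfold weightedOLS
    rw [mulVec_mulVec, Matrix.mul_nonsing_inv _ hinvv, one_mulVec]
  have hBβw : (Xᵀ * Matrix.diagonal w * X) *ᵥ βw = Xᵀ *ᵥ (fun i => w i * y i) := by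
    rw [hβw]; unfold weightedOLS
    rw [mulVec_mulVec, Matrix.mul_nonsing_inv _ hinvw, one_mulVec]
  have hgi : ∀ i, (X *ᵥ Δ) i = (X *ᵥ βv) i - (X *ᵥ βw) i := by
    intro i; rw [hΔ, mulVec_sub]; rfl
  -- key identities for Q and Q'
  have hAΔ : (Xᵀ * Matrix.diagonal v * X) *ᵥ Δ
      = Xᵀ *ᵥ (fun i => (v i - w i) * (y i - (X *ᵥ βw) i)) := by
    have hAβw : (Xᵀ * Matrix.diagonal v * X) *ᵥ βw
        = Xᵀ *ᵥ (fun i => w i * y i) + Xᵀ *ᵥ (fun i => (v i - w i) * (X *ᵥ βw) i) := by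
      have harg : ((fun i => v i * (X *ᵥ βw) i) - fun i => w i * (X *ᵥ βw) i)
          = fun i => (v i - w i) * (X *ᵥ βw) i := by
        funext i; simp only [Pi.sub_apply]; ring
      have h1 : (Xᵀ * Matrix.diagonal v * X) *ᵥ βw - (Xᵀ * Matrix.diagonal w * X) *ᵥ βw
          = Xᵀ *ᵥ (fun i => (v i - w i) * (X *ᵥ βw) i) := by
        rw [hquad v βw, hquad w βw, ← mulVec_sub, harg]
      rw [← hBβw, ← h1]
      abel
    have harg2 : ((fun i => v i * y i)
          - ((fun i => w i * y i) + fun i => (v i - w i) * (X *ᵥ βw) i))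
        = fun i => (v i - w i) * (y i - (X *ᵥ βw) i) := by
      funext i; simp only [Pi.sub_apply, Pi.add_apply]; ring
    calc (Xᵀ * Matrix.diagonal v * X) *ᵥ Δ
        = (Xᵀ * Matrix.diagonal v * X) *ᵥ βv - (Xᵀ * Matrix.diagonal v * X) *ᵥ βw := by
          rw [hΔ, mulVec_sub]
      _ = Xᵀ *ᵥ ((fun i => v i * y i)
            - ((fun i => w i * y i) + fun i => (v i - w i) * (X *ᵥ βw) i)) := by
          rw [hAβv, hAβw, mulVec_sub, mulVec_add]
      _ = _ := by rw [harg2]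
  have hBΔ : (Xᵀ * Matrix.diagonal w * X) *ᵥ Δ
      = Xᵀ *ᵥ (fun i => (v i - w i) * (y i - (X *ᵥ βv) i)) := by
    have hBβv : (Xᵀ * Matrix.diagonal w * X) *ᵥ βv
        = Xᵀ *ᵥ (fun i => v i * y i) - Xᵀ *ᵥ (fun i => (v i - w i) * (X *ᵥ βv) i) := by
      have harg : ((fun i => v i * (X *ᵥ βv) i) - fun i => w i * (X *ᵥ βv) i)
          = fun i => (v i - w i) * (X *ᵥ βv) i := by
        funext i; simp only [Pi.sub_apply]; ring
      have h1 : (Xᵀ * Matrix.diagonal v * X) *ᵥ βv - (Xᵀ * Matrix.diagonal w * X) *ᵥ βv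
          = Xᵀ *ᵥ (fun i => (v i - w i) * (X *ᵥ βv) i) := by
        rw [hquad v βv, hquad w βv, ← mulVec_sub, harg]
      rw [← hAβv, ← h1]
      abel
    have harg2 : ((fun i => v i * y i) - (fun i => (v i - w i) * (X *ᵥ βv) i)
          - fun i => w i * y i)
        = fun i => (v i - w i) * (y i - (X *ᵥ βv) i) := by
      funext i; simp only [Pi.sub_apply]; ring
    calc (Xᵀ * Matrix.diagonal w * X) *ᵥ Δ
        = (Xᵀ * Matrix.diagonal w * X) *ᵥ βv - (Xᵀ * Matrix.diagonal w * X) *ᵥ βw := by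
          rw [hΔ, mulVec_sub]
      _ = Xᵀ *ᵥ ((fun i => v i * y i) - (fun i => (v i - w i) * (X *ᵥ βv) i)
            - fun i => w i * y i) := by
          rw [hBβv, hBβw, mulVec_sub, mulVec_sub]
      _ = _ := by rw [harg2]
  have hQeq : Q = ∑ i, (v i - w i) * ((y i - (X *ᵥ βw) i) * (X *ᵥ Δ) i) := by
    rw [hQdef, hAΔ, hdotT]
    exact Finset.sum_congr rfl fun i _ => by ring
  have hQ'eq : Q' = ∑ i, (v i - w i) * ((y i - (X *ᵥ βv) i) * (X *ᵥ Δ) i) := by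
    rw [hQ'def, hBΔ, hdotT]
    exact Finset.sum_congr rfl fun i _ => by ring
  -- comparison of Q and Q'
  have hdiff : Q - Q' = ∑ i, (v i - w i) * (X *ᵥ Δ) i ^ 2 := by
    rw [hQeq, hQ'eq, ← Finset.sum_sub_distrib]
    refine Finset.sum_congr rfl fun i _ => ?_
    rw [hgi i]
    ring
  have hQ'le : Q' ≤ Q + ε * (L * Q') := by
    have hterm : ∀ i ∈ Finset.univ,
        -((v i - w i) * (X *ᵥ Δ) i ^ 2) ≤ |v i - w i| * (L * Q') := by
      intro i _
      by_cases hvw : w i ≤ v i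
      · have h1 : 0 ≤ (v i - w i) * (X *ᵥ Δ) i ^ 2 :=
          mul_nonneg (by linarith) (sq_nonneg _)
        have h2 : 0 ≤ |v i - w i| * (L * Q') :=
          mul_nonneg (abs_nonneg _) (mul_nonneg hL.le hQ'0)
        linarith
      · push_neg at hvw
        have hwi : w i ≠ 0 := by
          have := (hv01 i).1; intro h; rw [h] at hvw; linarith
        have hg := hgw i hwi
        have habs : |v i - w i| = w i - v i := by
          rw [abs_of_neg (show v i - w i < 0 by linarith)]; ring
        rw [habs]
        have := mul_le_mul_of_nonneg_left hg (show (0:ℝ) ≤ w i - v i by linarith)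
        linarith
    have h1 := Finset.sum_le_sum hterm
    rw [Finset.sum_neg_distrib, ← hdiff] at h1
    have h2 : ∑ i, |v i - w i| * (L * Q') = ε * (L * Q') := by
      rw [hε]; exact (Finset.sum_mul _ _ _).symm
    rw [h2] at h1
    linarith
  -- the uniform bound a on |XΔ| over the support
  set a := Real.sqrt (L * max Q Q') with hadef
  have ha0 : 0 ≤ a := hadef ▸ Real.sqrt_nonneg _
  have hmax0 : 0 ≤ L * max Q Q' := mul_nonneg hL.le (le_trans hQ0 (le_max_left _ _))
  have ha2 : a ^ 2 = L * max Q Q' := by rw [hadef]; exact Real.sq_sqrt hmax0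
  clear_value a
  have habs_g : ∀ i, v i ≠ 0 ∨ w i ≠ 0 → |(X *ᵥ Δ) i| ≤ a := by
    intro i hi
    have hsq : (X *ᵥ Δ) i ^ 2 ≤ a ^ 2 := by
      rw [ha2]
      rcases hi with h | h
      · exact le_trans (hgv i h) (mul_le_mul_of_nonneg_left (le_max_left _ _) hL.le)
      · exact le_trans (hgw i h) (mul_le_mul_of_nonneg_left (le_max_right _ _) hL.le)
    calc |(X *ᵥ Δ) i| = Real.sqrt ((X *ᵥ Δ) i ^ 2) := (Real.sqrt_sq_eq_abs _).symm
      _ ≤ Real.sqrt (a ^ 2) := Real.sqrt_le_sqrt hsq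
      _ = a := Real.sqrt_sq ha0
  -- the main per-term bound
  have hterm : ∀ i ∈ Finset.univ,
      (v i - w i) * ((y i - (X *ᵥ βw) i) * (X *ᵥ Δ) i) ≤ |v i - w i| * (a * R + L * Q) := by
    intro i _
    have hRHS0 : 0 ≤ a * R + L * Q :=
      add_nonneg (mul_nonneg ha0 hR.le) (mul_nonneg hL.le hQ0)
    by_cases hw : w i = 0
    · by_cases hv : v i = 0
      · have hz : v i - w i = 0 := by rw [hv, hw]; ring
        rw [hz, zero_mul, abs_zero, zero_mul]
      · -- v i ≠ 0, w i = 0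
        have hrv : |(X *ᵥ βv) i - y i| ≤ R := hresv i hv
        have hrv' : |y i - (X *ᵥ βv) i| ≤ R := by rwa [abs_sub_comm] at hrv
        have hga := habs_g i (Or.inl hv)
        have hgq := hgv i hv
        have hsplit : (v i - w i) * ((y i - (X *ᵥ βw) i) * (X *ᵥ Δ) i)
            = (v i - w i) * ((y i - (X *ᵥ βv) i) * (X *ᵥ Δ) i)
              + (v i - w i) * (X *ᵥ Δ) i ^ 2 := by
          rw [hgi i]; ring
        have h1 : (v i - w i) * ((y i - (X *ᵥ βv) i) * (X *ᵥ Δ) i) ≤ |v i - w i| * (R * a) := by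
          calc (v i - w i) * ((y i - (X *ᵥ βv) i) * (X *ᵥ Δ) i)
              ≤ |(v i - w i) * ((y i - (X *ᵥ βv) i) * (X *ᵥ Δ) i)| := le_abs_self _
            _ = |v i - w i| * (|y i - (X *ᵥ βv) i| * |(X *ᵥ Δ) i|) := by
                rw [abs_mul, abs_mul]
            _ ≤ |v i - w i| * (R * a) := by
                apply mul_le_mul_of_nonneg_left _ (abs_nonneg _)
                exact mul_le_mul hrv' hga (abs_nonneg _) hR.le
        have h2 : (v i - w i) * (X *ᵥ Δ) i ^ 2 ≤ |v i - w i| * (L * Q) := by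
          calc (v i - w i) * (X *ᵥ Δ) i ^ 2 ≤ |v i - w i| * (X *ᵥ Δ) i ^ 2 :=
              mul_le_mul_of_nonneg_right (le_abs_self _) (sq_nonneg _)
            _ ≤ |v i - w i| * (L * Q) := mul_le_mul_of_nonneg_left hgq (abs_nonneg _)
        rw [hsplit]
        have : |v i - w i| * (R * a) + |v i - w i| * (L * Q)
            = |v i - w i| * (a * R + L * Q) := by ring
        linarith
    · -- w i ≠ 0
      have hrw : |(X *ᵥ βw) i - y i| ≤ R := hresw i hw
      have hrw' : |y i - (X *ᵥ βw) i| ≤ R := by rwa [abs_sub_comm] at hrw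
      have hga := habs_g i (Or.inr hw)
      have hLQ0 : 0 ≤ |v i - w i| * (L * Q) :=
        mul_nonneg (abs_nonneg _) (mul_nonneg hL.le hQ0)
      calc (v i - w i) * ((y i - (X *ᵥ βw) i) * (X *ᵥ Δ) i)
          ≤ |(v i - w i) * ((y i - (X *ᵥ βw) i) * (X *ᵥ Δ) i)| := le_abs_self _
        _ = |v i - w i| * (|y i - (X *ᵥ βw) i| * |(X *ᵥ Δ) i|) := by rw [abs_mul, abs_mul]
        _ ≤ |v i - w i| * (R * a) := by
            apply mul_le_mul_of_nonneg_left _ (abs_nonneg _)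
            exact mul_le_mul hrw' hga (abs_nonneg _) hR.le
        _ ≤ |v i - w i| * (a * R + L * Q) := by
            have : |v i - w i| * (R * a) + |v i - w i| * (L * Q)
                = |v i - w i| * (a * R + L * Q) := by ring
            linarith
  have hQle : Q ≤ ε * (a * R + L * Q) := by
    have h1 := Finset.sum_le_sum hterm
    rw [← hQeq] at h1
    rw [hε, Finset.sum_mul]
    exact h1
  -- final arithmetic
  exact aux_arith L R ε Q Q' a hL hR hQ0 hQ'0 hε0 hclose ha0 ha2 hQ'le hQle
end
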